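/- Let κ be a regular uncountable cardinal and let A be a set of subsets of κ with |A| ≤ κ. Then the following are equivalent: (i) there is a function ℓ : κ → 𝒫(κ) such that for every a ∈ A there is a normal measure U on κ with {ξ < κ : ℓ(ξ) = a ∩ ξ} ∈ U; (ii) there exist at least |A| many pairwise distinct normal measures on κ. -/

import Mathlib

/-!
If `ℓ` guesses both `a` and `b` on sets of the same normal measure, these guessing sets meet
above every `x < κ`, so `a` and `b` agree at `x`; hence choosing, for each `a ∈ A`, a measure
witnessing the guess is injective. Conversely, given distinct normal measures `U_a` indexed by
`A` and an injection `e : A → κ`, separate each pair of measures by complementary sets and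
take the diagonal intersection along `e`: this yields pairwise disjoint sets `Y_a ∈ U_a`, and
`ℓ ξ := a ∩ ξ` for `ξ ∈ Y_a` guesses every `a ∈ A` on a `U_a`-large set.
-/

/-- A *normal measure* on (the set of ordinals below) `κ`: an ultrafilter on `κ`
that is proper, uniform (contains all final segments of `κ`) and normal
(closed under diagonal intersections). -/
structure NormalMeasure (κ : Ordinal) where
  sets : Set (Set Ordinal)
  sets_subset : ∀ X ∈ sets, X ⊆ Set.Iio κ
  univ_mem : Set.Iio κ ∈ sets
  empty_not_mem : ∅ ∉ sets
  superset_mem : ∀ X ∈ sets, ∀ Y, X ⊆ Y → Y ⊆ Set.Iio κ → Y ∈ sets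
  inter_mem : ∀ X ∈ sets, ∀ Y ∈ sets, X ∩ Y ∈ sets
  ultra : ∀ X, X ⊆ Set.Iio κ → X ∈ sets ∨ Set.Iio κ \ X ∈ sets
  uniform : ∀ α < κ, {ξ : Ordinal | α ≤ ξ ∧ ξ < κ} ∈ sets
  normal : ∀ f : Ordinal → Set Ordinal, (∀ α < κ, f α ∈ sets) →
      {ξ : Ordinal | ξ < κ ∧ ∀ α < ξ, ξ ∈ f α} ∈ sets

open Set Function

/-- The guessing set `S(ℓ, a)`. -/
def guessSet (κ : Ordinal) (ℓ : Ordinal → Set Ordinal) (a : Set Ordinal) : Set Ordinal :=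
  {ξ | ξ < κ ∧ ℓ ξ = a ∩ Iio ξ}

namespace NormalMeasure

variable {κ : Ordinal} (U : NormalMeasure κ)

theorem ext {V : NormalMeasure κ} (h : U.sets = V.sets) : U = V := by
  cases U; cases V; cases h; rfl

theorem nonempty_of_mem {X : Set Ordinal} (hX : X ∈ U.sets) : X.Nonempty :=
  nonempty_iff_ne_empty.mpr fun h => U.empty_not_mem (h ▸ hX)

theorem Ioo_mem (hκ : Order.IsSuccLimit κ) {α : Ordinal} (hα : α < κ) : Ioo α κ ∈ U.sets := by
  have h := U.uniform (Order.succ α) (hκ.succ_lt hα)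
  simp only [Order.succ_le_iff] at h
  exact h

theorem exists_separating {V : NormalMeasure κ} (h : U ≠ V) :
    ∃ X ∈ U.sets, Iio κ \ X ∈ V.sets := by
  by_contra! hUV
  refine h (U.ext (Set.ext fun X => ⟨fun hX => ?_, fun hX => ?_⟩))
  · exact (V.ultra X (U.sets_subset X hX)).resolve_right (hUV X hX)
  · refine (U.ultra X (V.sets_subset X hX)).resolve_right fun hX' => hUV _ hX' ?_
    rwa [sdiff_sdiff_cancel_left (V.sets_subset X hX)]

theorem diag_mem {ι : Type*} {e : ι → Ordinal} (he : Injective e) {D : ι → Set Ordinal}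
    (hD : ∀ j, D j ∈ U.sets) : {ξ | ξ < κ ∧ ∀ j, e j < ξ → ξ ∈ D j} ∈ U.sets := by
  set f : Ordinal → Set Ordinal := fun β => {ξ | ξ < κ ∧ ∀ j, e j = β → ξ ∈ D j}
  have hf : ∀ β < κ, f β ∈ U.sets := by
    intro β _
    by_cases hβ : ∃ j, e j = β
    · obtain ⟨j, rfl⟩ := hβ
      refine U.superset_mem _ (hD j) _ (fun ξ hξ => ⟨U.sets_subset _ (hD j) hξ, ?_⟩)
        fun ξ hξ => hξ.1
      intro k hk
      rwa [he hk]
    · rw [not_exists] at hβ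
      exact U.superset_mem _ U.univ_mem _ (fun ξ hξ => ⟨hξ, fun j hj => (hβ j hj).elim⟩)
        fun ξ hξ => hξ.1
  exact U.superset_mem _ (U.normal f hf) _
    (fun ξ ⟨hξ, h⟩ => ⟨hξ, fun j hj => (h _ hj).2 j rfl⟩) fun ξ hξ => hξ.1

theorem eq_of_guessSet_mem (hκ : Order.IsSuccLimit κ) {ℓ : Ordinal → Set Ordinal}
    {a b : Set Ordinal} (ha : a ⊆ Iio κ) (hb : b ⊆ Iio κ)
    (hSa : guessSet κ ℓ a ∈ U.sets) (hSb : guessSet κ ℓ b ∈ U.sets) : a = b := by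
  ext x
  by_cases hx : x < κ
  · obtain ⟨ξ, ⟨⟨-, hξa⟩, -, hξb⟩, hxξ, -⟩ :=
      U.nonempty_of_mem (U.inter_mem _ (U.inter_mem _ hSa _ hSb) _ (U.Ioo_mem hκ hx))
    have hab : a ∩ Iio ξ = b ∩ Iio ξ := hξa.symm.trans hξb
    simpa [hxξ] using congrArg (x ∈ ·) hab
  · exact iff_of_false (fun h => hx (ha h)) (fun h => hx (hb h))

end NormalMeasure

section DisjointFamily

variable {κ : Ordinal} {ι : Type*} {μ : ι → NormalMeasure κ}

theorem exists_mem_disjoint_of_injective (hμ : Injective μ) :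
    ∃ D : ι → ι → Set Ordinal,
      (∀ i j, D i j ∈ (μ i).sets) ∧ ∀ i j, i ≠ j → Disjoint (D i j) (D j i) := by
  classical
  have hX : ∀ i j, i ≠ j → ∃ X ∈ (μ i).sets, Iio κ \ X ∈ (μ j).sets :=
    fun i j h => (μ i).exists_separating (hμ.ne h)
  choose X hXi hXj using hX
  refine ⟨fun i j => if h : i = j then Iio κ else X i j h ∩ (Iio κ \ X j i (Ne.symm h)),
    fun i j => ?_, fun i j h => ?_⟩
  · dsimp only
    split_ifs with h
    · exact (μ i).univ_mem
    · exact (μ i).inter_mem _ (hXi i j h) _ (hXj j i (Ne.symm h))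
  · simp only [dif_neg h, dif_neg (Ne.symm h)]
    exact disjoint_left.mpr fun ξ h₁ h₂ => h₂.2.2 h₁.1

theorem exists_pairwise_disjoint_mem (hκ : Order.IsSuccLimit κ) (hμ : Injective μ)
    {e : ι → Ordinal} (he : Injective e) (heκ : ∀ i, e i < κ) :
    ∃ Y : ι → Set Ordinal, (∀ i, Y i ∈ (μ i).sets) ∧ Pairwise (Disjoint on Y) := by
  obtain ⟨D, hDmem, hDdisj⟩ := exists_mem_disjoint_of_injective hμ
  refine ⟨fun i => {ξ | ξ < κ ∧ ∀ j, e j < ξ → ξ ∈ D i j} ∩ Ioo (e i) κ, fun i =>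
    (μ i).inter_mem _ ((μ i).diag_mem he (hDmem i)) _ ((μ i).Ioo_mem hκ (heκ i)), ?_⟩
  intro i j hij
  refine disjoint_left.mpr ?_
  rintro ξ ⟨⟨-, hi⟩, hei, -⟩ ⟨⟨-, hj⟩, hej, -⟩
  exact disjoint_left.mp (hDdisj i j hij) (hi j hej) (hj i hei)

end DisjointFamily

theorem exists_eq_on_pairwise_disjoint {α β ι : Type*} [Nonempty β] {Y : ι → Set α}
    (hY : Pairwise (Disjoint on Y)) (g : ι → α → β) :
    ∃ ℓ : α → β, ∀ i, ∀ x ∈ Y i, ℓ x = g i x := by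
  classical
  refine ⟨fun x => if h : ∃ i, x ∈ Y i then g h.choose x else Classical.arbitrary β,
    fun i x hx => ?_⟩
  have h : ∃ i, x ∈ Y i := ⟨i, hx⟩
  have hi : h.choose = i := hY.eq (not_disjoint_iff.mpr ⟨x, h.choose_spec, hx⟩)
  simp only [dif_pos h, hi]

theorem stmt2_general (c : Cardinal) (hunc : Cardinal.aleph0 < c)
    (A : Set (Set Ordinal)) (hA : ∀ a ∈ A, a ⊆ Set.Iio c.ord)
    (hAcard : Cardinal.mk A ≤ Cardinal.mk (Set.Iio c.ord)) :
    (∃ ℓ : Ordinal → Set Ordinal,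
        ∀ a ∈ A, ∃ U : NormalMeasure c.ord,
          {ξ : Ordinal | ξ < c.ord ∧ ℓ ξ = a ∩ Set.Iio ξ} ∈ U.sets) ↔
      (∃ μ : A → NormalMeasure c.ord, Function.Injective μ) := by
  have hκ : Order.IsSuccLimit c.ord := Cardinal.isSuccLimit_ord hunc.le
  constructor
  · rintro ⟨ℓ, hℓ⟩
    choose U hU using hℓ
    refine ⟨fun a => U a a.2, fun a b hab => Subtype.ext ?_⟩
    have hSb : guessSet c.ord ℓ b ∈ (U a a.2).sets := by
      rw [show U a a.2 = U b b.2 from hab]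
      exact hU b b.2
    exact (U a a.2).eq_of_guessSet_mem hκ (hA a a.2) (hA b b.2) (hU a a.2) hSb
  · rintro ⟨μ, hμ⟩
    obtain ⟨e⟩ := (Cardinal.le_def _ _).mp hAcard
    obtain ⟨Y, hYmem, hYdisj⟩ := exists_pairwise_disjoint_mem hκ hμ
      (Subtype.val_injective.comp e.injective) fun a => (e a).2
    obtain ⟨ℓ, hℓ⟩ := exists_eq_on_pairwise_disjoint hYdisj fun a ξ => a.1 ∩ Iio ξ
    refine ⟨ℓ, fun a ha => ⟨μ ⟨a, ha⟩, (μ _).superset_mem _ (hYmem _) _ ?_ fun ξ hξ => hξ.1⟩⟩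
    exact fun ξ hξ => ⟨(μ _).sets_subset _ (hYmem _) hξ, hℓ _ ξ hξ⟩

/-- For a regular uncountable cardinal `κ` and a family `A` of at most `κ` many subsets
of `κ`, the following are equivalent: (i) there is an `A`-guessing measurable Laver
function `ℓ : κ → 𝒫(κ)`, i.e. for each `a ∈ A` the guessing set
`{ξ < κ : ℓ ξ = a ∩ ξ}` belongs to some normal measure on `κ`; (ii) there are at
least `|A|` many pairwise distinct normal measures on `κ`. -/
theorem stmt2 (c : Cardinal) (hreg : c.IsRegular) (hunc : Cardinal.aleph0 < c)
    (A : Set (Set Ordinal)) (hA : ∀ a ∈ A, a ⊆ Set.Iio c.ord)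
    (hAcard : Cardinal.mk A ≤ Cardinal.mk (Set.Iio c.ord)) :
    (∃ ℓ : Ordinal → Set Ordinal,
        ∀ a ∈ A, ∃ U : NormalMeasure c.ord,
          {ξ : Ordinal | ξ < c.ord ∧ ℓ ξ = a ∩ Set.Iio ξ} ∈ U.sets) ↔
      (∃ μ : A → NormalMeasure c.ord, Function.Injective μ) :=
  stmt2_general c hunc A hA hAcard
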